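/- Let G be a graph with a contraction sequence (G = G_1, ..., G_n) of width d and let k be a natural number. Let i in [2, n], let π = (T, D, ∅, f) be an extended i-profile with v in T (where v is the new vertex of G_i), let f' be compatible with π, let {(T_j, D_j, ∅, f_j) : j in [m]} be an f'-decomposition of π, and for each j in [m] let S_j be a solution of (T_j, D_j, ∅, f_j) with vertex-cover-value ν_j. Then S = ∪_{j∈[m]} S_j is a solution of π whose vertex-cover-value equals Σ_{j∈[m]} ν_j plus the sum, over all pairs 1 ≤ j < ℓ ≤ m and all pairs (u, w) with u in T_j, w in T_ℓ, and uw a black edge of G_{i-1}, of f_j(u)·|beta(w)| + f_ℓ(w)·|beta(u)| − f_j(u)·f_ℓ(w). -/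

import Mathlib

attribute [local instance 10] Classical.propDecidable

/-- A trigraph: a finite simple graph whose edges are partitioned into black and red edges. -/
structure Trigraph (α : Type) where
  verts : Finset α
  black : α → α → Prop
  red : α → α → Prop
  black_symm : ∀ x y, black x y → black y x
  red_symm : ∀ x y, red x y → red y x
  black_irrefl : ∀ x, ¬ black x x
  red_irrefl : ∀ x, ¬ red x x
  black_red_disjoint : ∀ x y, black x y → ¬ red x y
  black_mem : ∀ x y, black x y → x ∈ verts ∧ y ∈ verts
  red_mem : ∀ x y, red x y → x ∈ verts ∧ y ∈ verts

namespace Trigraph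

/-- The red graph of a trigraph. -/
def redGraph {α : Type} (G : Trigraph α) : SimpleGraph α where
  Adj := G.red
  symm := ⟨fun x y h => G.red_symm x y h⟩
  loopless := ⟨fun x h => G.red_irrefl x h⟩

/-- The red degree of a vertex. -/
noncomputable def redDegree {α : Type} (G : Trigraph α) (x : α) : ℕ :=
  Set.ncard {y | G.red x y}

end Trigraph

variable {α : Type} [DecidableEq α]

/-- `Contracts G G' u v w` : the trigraph `G'` is obtained from the trigraph `G` by
contracting the two distinct vertices `u, v` into the new vertex `w`. -/
def Contracts (G G' : Trigraph α) (u v w : α) : Prop :=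
  u ∈ G.verts ∧ v ∈ G.verts ∧ u ≠ v ∧ w ∉ G.verts ∧
  G'.verts = insert w (G.verts \ {u, v}) ∧
  (∀ x ∈ G.verts \ {u, v}, (G'.black w x ↔ G.black u x ∧ G.black v x)) ∧
  (∀ x ∈ G.verts \ {u, v},
    (G'.red w x ↔ (¬ (G.black u x ∧ G.black v x)) ∧
      (G.black u x ∨ G.red u x ∨ G.black v x ∨ G.red v x))) ∧
  (∀ x, x ∈ G.verts \ {u, v} → ∀ y, y ∈ G.verts \ {u, v} →
    ((G'.black x y ↔ G.black x y) ∧ (G'.red x y ↔ G.red x y)))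

/-- A contraction sequence `(G = G₁, …, Gₙ)` of a graph `G` (a trigraph with no red edges),
together with the data of the contracted vertices `cu i, cv i` and the new vertex `cw i`
at each step `i ∈ [2, n]`. -/
structure ContractionSeq (α : Type) [DecidableEq α] (n : ℕ) where
  seq : ℕ → Trigraph α
  cu : ℕ → α
  cv : ℕ → α
  cw : ℕ → α
  one_le : 1 ≤ n
  init_noRed : ∀ x y, ¬ (seq 1).red x y
  last_single : (seq n).verts.card = 1
  step : ∀ i, 2 ≤ i → i ≤ n → Contracts (seq (i - 1)) (seq i) (cu i) (cv i) (cw i)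

namespace ContractionSeq

variable {n : ℕ}

/-- The contraction sequence has width `d`: every vertex of every trigraph in the
sequence has red degree at most `d`. -/
def HasWidth (C : ContractionSeq α n) (d : ℕ) : Prop :=
  ∀ i, 1 ≤ i → i ≤ n → ∀ x, (C.seq i).redDegree x ≤ d

/-- The bag `β(u)` of a vertex `u` of `Gᵢ`: the set of vertices of `G = G₁`
contracted into `u`. -/
def bag (C : ContractionSeq α n) : ℕ → α → Finset α
  | 0, x => {x}
  | 1, x => {x}
  | i + 2, x =>
    if x = C.cw (i + 2) then bag C (i + 1) (C.cu (i + 2)) ∪ bag C (i + 1) (C.cv (i + 2))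
    else bag C (i + 1) x

/-- `β(T)`, the union of the bags of the vertices in `T`. -/
def bags (C : ContractionSeq α n) (i : ℕ) (T : Finset α) : Finset α :=
  T.biUnion (C.bag i)

end ContractionSeq

variable {n : ℕ}

/-- A basic `i`-profile `(T, D)`. -/
def IsBasicProfile (C : ContractionSeq α n) (k d i : ℕ) (T D : Finset α) : Prop :=
  T ⊆ (C.seq i).verts ∧ T.card ≤ k * (d + 1) ∧
  (SimpleGraph.induce (↑T : Set α) (C.seq i).redGraph).Connected ∧
  D ⊆ T ∧ D.card ≤ k

/-- `T' = (T \ {v}) ∪ {u₁, u₂}` where `v = cw i` is the new vertex of `Gᵢ` and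
`u₁ = cu i`, `u₂ = cv i` are the vertices contracted into it. -/
def newT (C : ContractionSeq α n) (i : ℕ) (T : Finset α) : Finset α :=
  T.erase (C.cw i) ∪ {C.cu i, C.cv i}

/-- `D' ⊆ T'` is compatible with the basic `i`-profile `(T, D)`. -/
def DCompat (C : ContractionSeq α n) (k i : ℕ) (T D D' : Finset α) : Prop :=
  D' ⊆ newT C i T ∧
  D.erase (C.cw i) = (D'.erase (C.cu i)).erase (C.cv i) ∧
  D'.card ≤ k ∧
  (C.cw i ∈ D ↔ (C.cu i ∈ D' ∨ C.cv i ∈ D'))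

/-- A `D'`-decomposition `{(T₁, D₁), …, (Tₘ, Dₘ)}` of the basic `i`-profile `(T, D)`. -/
def IsDDecomp (C : ContractionSeq α n) (k d i : ℕ) (T D D' : Finset α)
    (m : ℕ) (Tj Dj : Fin m → Finset α) : Prop :=
  (∀ j, IsBasicProfile C k d (i - 1) (Tj j) (Dj j)) ∧
  (∀ j ℓ, j ≠ ℓ → Disjoint (Tj j) (Tj ℓ)) ∧
  newT C i T = Finset.univ.biUnion Tj ∧
  D' = Finset.univ.biUnion Dj ∧
  DCompat C k i T D D' ∧
  (∀ j ℓ, j ≠ ℓ → ∀ x ∈ Tj j, ∀ y ∈ Dj ℓ, ¬ (C.seq (i - 1)).red x y)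

/-- An extended `i`-profile `(T, D, M, f)`; the function `f : T → [0, k]` is modelled as a
function `f : α → ℕ` vanishing outside `T`. -/
def IsExtProfile (C : ContractionSeq α n) (k d i : ℕ) (T D M : Finset α) (f : α → ℕ) : Prop :=
  IsBasicProfile C k d i T D ∧ M ⊆ T ∧
  (∀ u, u ∉ T → f u = 0) ∧
  (∀ u ∈ T, f u ≤ k) ∧
  (∑ u ∈ T, f u) ≤ k ∧
  (∀ u ∈ T, f u ≤ (C.bag i u).card) ∧
  D = T.filter (fun u => f u ≠ 0)

/-- A solution of an extended `i`-profile `(T, D, M, f)`. -/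
def IsSolution (C : ContractionSeq α n) (i : ℕ) (T : Finset α) (f : α → ℕ)
    (S : Finset α) : Prop :=
  S ⊆ C.bags i T ∧ ∀ u ∈ T, f u = (S ∩ C.bag i u).card

/-- The closed neighborhood `N[S]` of `S` in the graph `G = G₁`. -/
def closedNbhd (C : ContractionSeq α n) (S : Finset α) : Set α :=
  ↑S ∪ {x | ∃ y ∈ S, (C.seq 1).black x y}

/-- The dominating-set-value `|N[S] ∩ β(M)|` of a solution `S`. -/
noncomputable def dsValue (C : ContractionSeq α n) (i : ℕ) (M S : Finset α) : ℕ :=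
  Set.ncard (closedNbhd C S ∩ ↑(C.bags i M))

/-- The vertex-cover-value of a solution `S`: the number of edges of `G` with one
endpoint in `S` and the other endpoint in `β(T)`. -/
noncomputable def vcValue (C : ContractionSeq α n) (i : ℕ) (T S : Finset α) : ℕ :=
  Set.ncard {e : Sym2 α | ∃ x y, e = s(x, y) ∧ (C.seq 1).black x y ∧ x ∈ S ∧ y ∈ C.bags i T}

/-- The function `f' : T' → [0, k]` is compatible with the extended `i`-profile
`(T, D, M, f)`. -/
def FCompat (C : ContractionSeq α n) (k i : ℕ) (T : Finset α) (f f' : α → ℕ) : Prop :=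
  (∀ u, u ∉ newT C i T → f' u = 0) ∧
  (∀ u ∈ newT C i T, f' u ≤ k) ∧
  f (C.cw i) = f' (C.cu i) + f' (C.cv i) ∧
  f' (C.cu i) ≤ (C.bag (i - 1) (C.cu i)).card ∧
  f' (C.cv i) ≤ (C.bag (i - 1) (C.cv i)).card ∧
  (∀ u ∈ T.erase (C.cw i), f' u = f u)

/-- `D' = {u ∈ T' : f'(u) ≠ 0}`. -/
def Dset (C : ContractionSeq α n) (i : ℕ) (T : Finset α) (f' : α → ℕ) : Finset α :=
  (newT C i T).filter (fun u => f' u ≠ 0)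

/-- `M-hat = (M \ {v}) ∪ {u₁, u₂}` if `v ∈ M`, and `M-hat = M` otherwise. -/
def Mhat (C : ContractionSeq α n) (i : ℕ) (M : Finset α) : Finset α :=
  if C.cw i ∈ M then M.erase (C.cw i) ∪ {C.cu i, C.cv i} else M

/-- `M' = {u ∈ M-hat : u has no black neighbor in D' in G_{i-1}}`. -/
noncomputable def Mset (C : ContractionSeq α n) (i : ℕ) (M D' : Finset α) : Finset α :=
  (Mhat C i M).filter (fun u => ¬ ∃ w ∈ D', (C.seq (i - 1)).black u w)

/-- An `f'`-decomposition `{(Tⱼ, Dⱼ, Mⱼ, fⱼ) : j ∈ [m]}` of the extended `i`-profile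
`(T, D, M, f)`. -/
def IsFDecomp (C : ContractionSeq α n) (k d i : ℕ) (T D M : Finset α) (f' : α → ℕ)
    (m : ℕ) (Tj Dj Mj : Fin m → Finset α) (fj : Fin m → α → ℕ) : Prop :=
  (∀ j, IsExtProfile C k d (i - 1) (Tj j) (Dj j) (Mj j) (fj j)) ∧
  (∀ j, ∀ u ∈ Tj j, fj j u = f' u) ∧
  Dset C i T f' = Finset.univ.biUnion Dj ∧
  Mset C i M (Dset C i T f') = Finset.univ.biUnion Mj ∧
  IsDDecomp C k d i T D (Dset C i T f') m Tj Dj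

/-- The adjacency relation of the expanded graph `G_π` of a virtual profile with
context `T`, virtual vertices `Vv` and virtual edges `E`. -/
def expAdj (C : ContractionSeq α n) (i : ℕ) (T Vv : Finset α) (E : Finset (Sym2 α))
    (x y : α) : Prop :=
  (x ∈ C.bags i T ∧ y ∈ C.bags i T ∧ (C.seq 1).black x y) ∨
  (x ∈ Vv ∧ y ∈ Vv ∧ s(x, y) ∈ E) ∨
  (y ∈ Vv ∧ ∃ u ∈ T, x ∈ C.bag i u ∧ s(u, y) ∈ E) ∨
  (x ∈ Vv ∧ ∃ u ∈ T, y ∈ C.bag i u ∧ s(u, x) ∈ E)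

/-- A virtual `i`-profile `(T, D, V, E, f, H)`.  The graph `H` is given by its labeling
`h : [k] → V(H)` (so `V(H)` is the range of `h`) and its edge set `HE`. -/
def IsVirtualProfile (C : ContractionSeq α n) (k d i : ℕ)
    (T D Vv : Finset α) (E : Finset (Sym2 α)) (f h : Fin k → α)
    (HE : Finset (Sym2 α)) : Prop :=
  IsBasicProfile C k d i T D ∧
  Vv.card ≤ k ∧
  (∀ x ∈ Vv, ∀ j, 1 ≤ j → j ≤ n → x ∉ (C.seq j).verts) ∧
  (∀ e ∈ E, ∃ u w, e = s(u, w) ∧ u ∈ Vv ∪ T ∧ w ∈ Vv) ∧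
  (∀ a, f a ∈ D ∪ Vv) ∧
  (∀ x ∈ D ∪ Vv, ∃ a, f a = x) ∧
  (∀ u ∈ D, (Finset.univ.filter (fun a => f a = u)).card ≤ (C.bag i u).card) ∧
  (∀ e ∈ HE, ¬ e.IsDiag ∧ ∀ x ∈ e, ∃ a, h a = x)

/-- A solution `(s₁, …, s_k)` of a virtual `i`-profile. -/
def IsVSolution (C : ContractionSeq α n) (i k : ℕ)
    (T D Vv : Finset α) (E : Finset (Sym2 α)) (f h : Fin k → α) (HE : Finset (Sym2 α))
    (sol : Fin k → α) : Prop :=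
  (∀ a, (f a ∈ Vv → sol a = f a) ∧ (f a ∈ D → sol a ∈ C.bag i (f a))) ∧
  (∀ a b, sol a = sol b ↔ h a = h b) ∧
  (∀ a b, expAdj C i T Vv E (sol a) (sol b) ↔ s(h a, h b) ∈ HE)

/-- Quantifier-free first-order formulas in the language of graphs with free variables
`x₁, …, x_k, y` (the variable `y` being the last one). -/
inductive QF (k : ℕ) : Type where
  | eq : Fin (k + 1) → Fin (k + 1) → QF k
  | adj : Fin (k + 1) → Fin (k + 1) → QF k
  | not : QF k → QF k
  | and : QF k → QF k → QF k
  | or : QF k → QF k → QF k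

/-- Satisfaction of a quantifier-free formula under an adjacency relation `A` and a
valuation `val` of the variables. -/
def QF.Sat {β : Type} {k : ℕ} (A : β → β → Prop) (val : Fin (k + 1) → β) : QF k → Prop
  | .eq a b => val a = val b
  | .adj a b => A (val a) (val b)
  | .not φ => ¬ QF.Sat A val φ
  | .and φ ψ => QF.Sat A val φ ∧ QF.Sat A val ψ
  | .or φ ψ => QF.Sat A val φ ∨ QF.Sat A val ψ

/-- The value `Σ_{α ∈ I} |{u ∈ β(T) : G_π ⊨ ψ_α(s₁, …, s_k, u)}|` of a solution of a
virtual `i`-profile. -/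
noncomputable def vValue {I : Type} [Fintype I] {k : ℕ} (ψ : I → QF k)
    (C : ContractionSeq α n) (i : ℕ) (T Vv : Finset α) (E : Finset (Sym2 α))
    (sol : Fin k → α) : ℕ :=
  ∑ a : I, Set.ncard {u : α | u ∈ C.bags i T ∧
    QF.Sat (expAdj C i T Vv E) (Fin.snoc sol u) (ψ a)}

/-- The function `f' : [k] → T' ∪ V` is compatible with the virtual `i`-profile. -/
def VFCompat (C : ContractionSeq α n) (i k : ℕ) (f f' : Fin k → α) : Prop :=
  ∀ a, (f a = C.cw i → (f' a = C.cu i ∨ f' a = C.cv i)) ∧ (f a ≠ C.cw i → f' a = f a)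

/-- `E' = {uw ∈ E : u, w ∈ T' ∪ V} ∪ {u₁w, u₂w : vw ∈ E}`. -/
def Eprime (C : ContractionSeq α n) (i : ℕ) (T Vv : Finset α) (E : Finset (Sym2 α)) :
    Set (Sym2 α) :=
  {e | e ∈ E ∧ ∀ x ∈ e, x ∈ newT C i T ∪ Vv} ∪
  {e | ∃ w, s(C.cw i, w) ∈ E ∧ (e = s(C.cu i, w) ∨ e = s(C.cv i, w))}

/-- `D' = range(f') ∩ T'`. -/
noncomputable def rangeD {k : ℕ} (C : ContractionSeq α n) (i : ℕ) (T : Finset α)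
    (f' : Fin k → α) : Finset α :=
  (newT C i T).filter (fun u => ∃ a, f' a = u)

/-- An `f'`-decomposition `{(Tⱼ, Dⱼ, Vⱼ, Eⱼ, fⱼ, H) : j ∈ [m]}` of the virtual
`i`-profile `(T, D, V, E, f, H)`. -/
def IsVDecomp (C : ContractionSeq α n) (k d i : ℕ)
    (T D Vv : Finset α) (E : Finset (Sym2 α)) (f h : Fin k → α) (HE : Finset (Sym2 α))
    (f' : Fin k → α) (m : ℕ) (Tj Dj Vj : Fin m → Finset α)
    (Ej : Fin m → Finset (Sym2 α)) (fj : Fin m → Fin k → α) : Prop :=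
  IsDDecomp C k d i T D (rangeD C i T f') m Tj Dj ∧
  (∀ j, IsVirtualProfile C k d (i - 1) (Tj j) (Dj j) (Vj j) (Ej j) (fj j) h HE) ∧
  (∀ j, Vj j =
    Vv ∪ (Finset.univ.filter (fun a => f' a ∈ rangeD C i T f' \ Dj j)).image h) ∧
  (∀ j a, (f' a ∈ Dj j ∪ Vv → fj j a = f' a) ∧
          (f' a ∈ rangeD C i T f' \ Dj j → fj j a = h a)) ∧
  (∀ j e, e ∈ Ej j ↔
    ((e ∈ Eprime C i T Vv E ∧ ∀ x ∈ e, x ∈ Vv ∪ Tj j) ∨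
     (∃ u a, e = s(u, h a) ∧ u ∈ Vv ∪ Tj j ∧ f' a ∈ rangeD C i T f' \ Dj j ∧
        (s(u, f' a) ∈ Eprime C i T Vv E ∨ (C.seq (i - 1)).black u (f' a))) ∨
     (∃ a b, e = s(h a, h b) ∧ s(h a, h b) ∈ HE ∧
        f' a ∈ rangeD C i T f' \ Dj j ∧ f' b ∈ rangeD C i T f' \ Dj j)))

/-- `⊕_{j ∈ [m]} sⱼ = s¹ ⊕ (s² ⊕ ( … ))`, where the `a`-th entry of `s¹ ⊕ s²` is
`s¹ a` if `f₁ a ∈ D₁` and `s² a` otherwise. -/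
noncomputable def bigOplus {k : ℕ} [Nonempty α] :
    (m : ℕ) → (Fin m → Fin k → α) → (Fin m → Fin k → α) → (Fin m → Finset α) →
      Fin k → α
  | 0, _, _, _ => fun _ => Classical.arbitrary α
  | 1, sol, _, _ => sol 0
  | m + 2, sol, f, D => fun a =>
      if f 0 a ∈ D 0 then sol 0 a
      else bigOplus (m + 1) (fun j => sol j.succ) (fun j => f j.succ)
        (fun j => D j.succ) a


/-!
Along the contraction sequence, the bags of two distinct vertices `u, w` of `G_j` are disjoint, a
black edge `uw` makes `β(u), β(w)` completely adjacent in `G`, and a non-edge makes them completely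
non-adjacent; this is preserved by each contraction. Hence the bags of `T₁, …, Tₘ` partition
`β(T)`, which makes `S` a solution, and an edge of `G` counted by the vertex-cover-value of `S`
either lies inside one `β(Tⱼ)` (counted by `νⱼ`) or joins `β(u) ⊆ β(Tⱼ)` to `β(w) ⊆ β(T_ℓ)` with
`j < ℓ`. In the latter case it meets `S`, so `u ∈ Dⱼ` or `w ∈ D_ℓ`; then `uw` is not red, hence
black, and inclusion–exclusion counts the pairs of `β(u) × β(w)` meeting `S` as
`fⱼ(u)|β(w)| + f_ℓ(w)|β(u)| − fⱼ(u) f_ℓ(w)`.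
-/

section EdgeCounting

open Finset Function

theorem Finset.card_product_filter_mem_or {β γ : Type*} [DecidableEq β] [DecidableEq γ]
    (A SA : Finset β) (B SB : Finset γ) :
    #((A ×ˢ B).filter fun p => p.1 ∈ SA ∨ p.2 ∈ SB) =
      #(SA ∩ A) * #B + #(SB ∩ B) * #A - #(SA ∩ A) * #(SB ∩ B) := by
  have hunion : ((A ×ˢ B).filter fun p => p.1 ∈ SA ∨ p.2 ∈ SB) =
      (SA ∩ A) ×ˢ B ∪ A ×ˢ (SB ∩ B) := by
    ext p
    simp only [mem_filter, mem_product, mem_union, mem_inter]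
    tauto
  have hinter : (SA ∩ A) ×ˢ B ∩ A ×ˢ (SB ∩ B) = (SA ∩ A) ×ˢ (SB ∩ B) := by
    ext p
    simp only [mem_inter, mem_product]
    tauto
  have h := card_union_add_card_inter ((SA ∩ A) ×ˢ B) (A ×ˢ (SB ∩ B))
  rw [hinter, card_product, card_product, card_product] at h
  rw [hunion, mul_comm #(SB ∩ B)]
  omega

theorem Finset.card_image_sym2Mk_of_subset_product {β : Type*} [DecidableEq β]
    {A B : Finset β} {P : Finset (β × β)} (hAB : Disjoint A B) (hP : P ⊆ A ×ˢ B) :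
    #(P.image Sym2.mk.uncurry) = #P := by
  refine card_image_of_injOn fun p hp q hq hpq => ?_
  obtain ⟨hp1, hp2⟩ := mem_product.mp (hP hp)
  obtain ⟨hq1, hq2⟩ := mem_product.mp (hP hq)
  rcases Sym2.eq_iff.mp hpq with ⟨h1, h2⟩ | ⟨h1, -⟩
  · exact Prod.ext h1 h2
  · exact absurd (h1 ▸ hq2) (Finset.disjoint_left.mp hAB hp1)

namespace SimpleGraph

variable {V ι : Type*} [DecidableEq V] (G : SimpleGraph V) [DecidableRel G.Adj]

def edgesFrom (S W : Finset V) : Finset (Sym2 V) :=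
  (G.interedges S W).image Sym2.mk.uncurry

def crossEdges (S W : ι → Finset V) (j ℓ : ι) : Finset (V × V) :=
  (G.interedges (W j) (W ℓ)).filter fun q => q.1 ∈ S j ∨ q.2 ∈ S ℓ

variable {G}

theorem mem_edgesFrom {S W : Finset V} {e : Sym2 V} :
    e ∈ G.edgesFrom S W ↔ ∃ x ∈ S, ∃ y ∈ W, G.Adj x y ∧ s(x, y) = e := by
  simp only [edgesFrom, mem_image, mem_interedges_iff, Prod.exists, uncurry_apply_pair,
    and_assoc, exists_and_left]

theorem mk_mem_edgesFrom {S W : Finset V} {x y : V} (hx : x ∈ S) (hy : y ∈ W)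
    (hxy : G.Adj x y) : s(x, y) ∈ G.edgesFrom S W :=
  mem_edgesFrom.mpr ⟨x, hx, y, hy, hxy, rfl⟩

theorem mem_of_mem_edgesFrom {S W : Finset V} (hSW : S ⊆ W) {e : Sym2 V}
    (he : e ∈ G.edgesFrom S W) {z : V} (hz : z ∈ e) : z ∈ W := by
  obtain ⟨x, hx, y, hy, -, rfl⟩ := mem_edgesFrom.mp he
  rcases Sym2.mem_iff.mp hz with rfl | rfl
  exacts [hSW hx, hy]

section Partition

variable {S W : ι → Finset V}

theorem edgesFrom_biUnion [Fintype ι] [LinearOrder ι] (hSW : ∀ j, S j ⊆ W j) :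
    G.edgesFrom (univ.biUnion S) (univ.biUnion W) =
      univ.biUnion (fun j => G.edgesFrom (S j) (W j)) ∪
        (univ.filter fun p : ι × ι => p.1 < p.2).biUnion
          fun p => (crossEdges G S W p.1 p.2).image Sym2.mk.uncurry := by
  ext e
  simp only [mem_union, mem_biUnion, mem_univ, true_and, mem_filter, mem_image, crossEdges,
    mem_interedges_iff, Prod.exists, uncurry_apply_pair]
  constructor
  · intro he
    obtain ⟨x, hx, y, hy, hxy, rfl⟩ := mem_edgesFrom.mp he
    obtain ⟨j, hxj⟩ := by simpa using hx
    obtain ⟨ℓ, hyℓ⟩ := by simpa using hy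
    rcases lt_trichotomy j ℓ with hjℓ | rfl | hℓj
    · exact .inr ⟨j, ℓ, hjℓ, x, y, ⟨⟨hSW j hxj, hyℓ, hxy⟩, .inl hxj⟩, rfl⟩
    · exact .inl ⟨j, mk_mem_edgesFrom hxj hyℓ hxy⟩
    · exact .inr ⟨ℓ, j, hℓj, y, x, ⟨⟨hyℓ, hSW j hxj, hxy.symm⟩, .inr hxj⟩, Sym2.eq_swap⟩
  · rintro (⟨j, he⟩ | ⟨a, b, -, x, y, ⟨⟨hx, hy, hxy⟩, hS⟩, rfl⟩)
    · obtain ⟨x, hx, y, hy, hxy, rfl⟩ := mem_edgesFrom.mp he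
      exact mk_mem_edgesFrom (mem_biUnion.mpr ⟨j, mem_univ _, hx⟩)
        (mem_biUnion.mpr ⟨j, mem_univ _, hy⟩) hxy
    · rcases hS with hS | hS
      · exact mk_mem_edgesFrom (mem_biUnion.mpr ⟨a, mem_univ _, hS⟩)
          (mem_biUnion.mpr ⟨b, mem_univ _, hy⟩) hxy
      · rw [Sym2.eq_swap]
        exact mk_mem_edgesFrom (mem_biUnion.mpr ⟨b, mem_univ _, hS⟩)
          (mem_biUnion.mpr ⟨a, mem_univ _, hx⟩) hxy.symm

theorem exists_of_mem_image_crossEdges {j ℓ : ι} {e : Sym2 V}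
    (he : e ∈ (crossEdges G S W j ℓ).image Sym2.mk.uncurry) :
    ∃ x ∈ W j, ∃ y ∈ W ℓ, s(x, y) = e := by
  obtain ⟨⟨x, y⟩, hxy, rfl⟩ := mem_image.mp he
  obtain ⟨hx, hy, -⟩ := G.mem_interedges_iff.mp (mem_filter.mp hxy).1
  exact ⟨x, hx, y, hy, rfl⟩

theorem card_edgesFrom_biUnion [Fintype ι] [LinearOrder ι] (hW : Pairwise (Disjoint on W))
    (hSW : ∀ j, S j ⊆ W j) :
    #(G.edgesFrom (univ.biUnion S) (univ.biUnion W)) =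
      ∑ j, #(G.edgesFrom (S j) (W j)) +
        ∑ p ∈ univ.filter (fun p : ι × ι => p.1 < p.2), #(crossEdges G S W p.1 p.2) := by
  have index_eq {j ℓ : ι} {x : V} (hj : x ∈ W j) (hℓ : x ∈ W ℓ) : j = ℓ :=
    by_contra fun h => Finset.disjoint_left.mp (hW h) hj hℓ
  have hinner :
      (↑(univ : Finset ι) : Set ι).PairwiseDisjoint fun j => G.edgesFrom (S j) (W j) := by
    refine fun j _ ℓ _ hjℓ => Finset.disjoint_left.mpr fun e hj hℓ => hjℓ ?_
    obtain ⟨x, hx, y, -, -, rfl⟩ := mem_edgesFrom.mp hj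
    exact index_eq (hSW j hx) (mem_of_mem_edgesFrom (hSW ℓ) hℓ (Sym2.mem_mk_left x y))
  have hcross : (↑(univ.filter fun p : ι × ι => p.1 < p.2) : Set (ι × ι)).PairwiseDisjoint
      fun p => (crossEdges G S W p.1 p.2).image Sym2.mk.uncurry := by
    refine fun p hp p' hp' hpp' => Finset.disjoint_left.mpr fun e he he' => hpp' ?_
    obtain ⟨x, hx, y, hy, rfl⟩ := exists_of_mem_image_crossEdges he
    obtain ⟨x', hx', y', hy', hxy⟩ := exists_of_mem_image_crossEdges he'
    have hlt : p.1 < p.2 := (mem_filter.mp hp).2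
    have hlt' : p'.1 < p'.2 := (mem_filter.mp hp').2
    rcases Sym2.eq_iff.mp hxy with ⟨rfl, rfl⟩ | ⟨rfl, rfl⟩
    · exact Prod.ext (index_eq hx hx') (index_eq hy hy')
    · rw [index_eq hx hy', index_eq hy hx'] at hlt
      exact absurd hlt' hlt.not_gt
  have hinner_cross : Disjoint (univ.biUnion fun j => G.edgesFrom (S j) (W j))
      ((univ.filter fun p : ι × ι => p.1 < p.2).biUnion
        fun p => (crossEdges G S W p.1 p.2).image Sym2.mk.uncurry) := by
    refine Finset.disjoint_left.mpr fun e he he' => ?_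
    obtain ⟨j, -, hj⟩ := mem_biUnion.mp he
    obtain ⟨p, hp, hp'⟩ := mem_biUnion.mp he'
    obtain ⟨x, hx, y, hy, rfl⟩ := exists_of_mem_image_crossEdges hp'
    have h1 := index_eq hx (mem_of_mem_edgesFrom (hSW j) hj (Sym2.mem_mk_left x y))
    have h2 := index_eq hy (mem_of_mem_edgesFrom (hSW j) hj (Sym2.mem_mk_right x y))
    exact (mem_filter.mp hp).2.ne (h1.trans h2.symm)
  rw [edgesFrom_biUnion hSW, card_union_of_disjoint hinner_cross, card_biUnion hinner,
    card_biUnion hcross]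
  refine congrArg _ (sum_congr rfl fun p hp => ?_)
  exact card_image_sym2Mk_of_subset_product (hW (mem_filter.mp hp).2.ne)
    ((filter_subset _ _).trans (filter_subset _ _))

end Partition

end SimpleGraph

end EdgeCounting

namespace Trigraph

def blackGraph {α : Type} (G : Trigraph α) : SimpleGraph α where
  Adj := G.black
  symm := ⟨fun x y h => G.black_symm x y h⟩
  loopless := ⟨fun x h => G.black_irrefl x h⟩

end Trigraph

namespace ContractionSeq

open Finset

variable (C : ContractionSeq α n)

theorem bag_one (x : α) : C.bag 1 x = {x} := rfl

theorem bag_of_ne {i : ℕ} (h2 : 2 ≤ i) {x : α} (hx : x ≠ C.cw i) :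
    C.bag i x = C.bag (i - 1) x := by
  obtain ⟨j, rfl⟩ : ∃ j, i = j + 2 := ⟨i - 2, by omega⟩
  simp [bag, hx]

theorem bag_cw {i : ℕ} (h2 : 2 ≤ i) :
    C.bag i (C.cw i) = C.bag (i - 1) (C.cu i) ∪ C.bag (i - 1) (C.cv i) := by
  obtain ⟨j, rfl⟩ : ∃ j, i = j + 2 := ⟨i - 2, by omega⟩
  simp [bag]

theorem induction_on_pairs {P : ℕ → α → α → Prop}
    (symm : ∀ j u w, P j u w → P j w u)
    (one : ∀ u w, u ≠ w → P 1 u w)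
    (contract : ∀ i, 2 ≤ i → i ≤ n → ∀ x ∈ (C.seq (i - 1)).verts \ {C.cu i, C.cv i},
      P (i - 1) (C.cu i) x → P (i - 1) (C.cv i) x → P i (C.cw i) x)
    (keep : ∀ i, 2 ≤ i → i ≤ n → ∀ x ∈ (C.seq (i - 1)).verts \ {C.cu i, C.cv i},
      ∀ y ∈ (C.seq (i - 1)).verts \ {C.cu i, C.cv i}, x ≠ y → P (i - 1) x y → P i x y)
    {j : ℕ} (hj : 1 ≤ j) (hjn : j ≤ n) {u w : α} (hu : u ∈ (C.seq j).verts)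
    (hw : w ∈ (C.seq j).verts) (huw : u ≠ w) : P j u w := by
  induction j, hj using Nat.le_induction generalizing u w with
  | base => exact one u w huw
  | succ j hj ih =>
    obtain ⟨hcu, hcv, -, -, hverts, -⟩ := C.step (j + 1) (by omega) hjn
    have ih' := @ih (by omega)
    have hne {x : α} (hx : x ∈ (C.seq j).verts \ {C.cu (j + 1), C.cv (j + 1)}) :
        C.cu (j + 1) ≠ x ∧ C.cv (j + 1) ≠ x := by
      simp only [mem_sdiff, mem_insert, mem_singleton] at hx
      exact ⟨fun h => hx.2 (.inl h.symm), fun h => hx.2 (.inr h.symm)⟩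
    have hnew {x : α} (hx : x ∈ (C.seq j).verts \ {C.cu (j + 1), C.cv (j + 1)}) :
        P (j + 1) (C.cw (j + 1)) x :=
      contract (j + 1) (by omega) hjn x hx (ih' hcu (mem_sdiff.mp hx).1 (hne hx).1)
        (ih' hcv (mem_sdiff.mp hx).1 (hne hx).2)
    rw [hverts, mem_insert] at hu hw
    rcases hu with rfl | hu <;> rcases hw with rfl | hw
    · exact absurd rfl huw
    · exact hnew hw
    · exact symm _ _ _ (hnew hu)
    · exact keep (j + 1) (by omega) hjn u hu w hw huw
        (ih' (mem_sdiff.mp hu).1 (mem_sdiff.mp hw).1 huw)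

structure HomogeneousBags (j : ℕ) (u w : α) : Prop where
  disjoint : Disjoint (C.bag j u) (C.bag j w)
  black_of_black : (C.seq j).black u w → ∀ x ∈ C.bag j u, ∀ y ∈ C.bag j w, (C.seq 1).black x y
  black_or_red : ∀ x ∈ C.bag j u, ∀ y ∈ C.bag j w, (C.seq 1).black x y →
    (C.seq j).black u w ∨ (C.seq j).red u w

variable {C}

theorem HomogeneousBags.symm {j : ℕ} {u w : α} (h : C.HomogeneousBags j u w) :
    C.HomogeneousBags j w u where
  disjoint := h.disjoint.symm
  black_of_black hb x hx y hy :=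
    (C.seq 1).black_symm _ _ (h.black_of_black ((C.seq j).black_symm _ _ hb) y hy x hx)
  black_or_red x hx y hy hb :=
    (h.black_or_red y hy x hx ((C.seq 1).black_symm _ _ hb)).imp
      ((C.seq j).black_symm _ _) ((C.seq j).red_symm _ _)

theorem homogeneousBags_one {u w : α} (huw : u ≠ w) : C.HomogeneousBags 1 u w where
  disjoint := by simpa [bag_one] using huw
  black_of_black hb x hx y hy := by
    rw [bag_one, mem_singleton] at hx hy
    exact hx ▸ hy ▸ hb
  black_or_red x hx y hy hb := by
    rw [bag_one, mem_singleton] at hx hy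
    exact .inl (hx ▸ hy ▸ hb)

theorem HomogeneousBags.contract {i : ℕ} (h2 : 2 ≤ i) (hin : i ≤ n) {x : α}
    (hx : x ∈ (C.seq (i - 1)).verts \ {C.cu i, C.cv i})
    (hu : C.HomogeneousBags (i - 1) (C.cu i) x) (hv : C.HomogeneousBags (i - 1) (C.cv i) x) :
    C.HomogeneousBags i (C.cw i) x := by
  obtain ⟨-, -, -, hcw, -, hblack, hred, -⟩ := C.step i h2 hin
  have hbx : C.bag i x = C.bag (i - 1) x :=
    C.bag_of_ne h2 fun h => hcw (h ▸ (mem_sdiff.mp hx).1)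
  refine ⟨?_, fun hb y hy z hz => ?_, fun y hy z hz hyz => ?_⟩ <;> rw [C.bag_cw h2, hbx] at *
  · exact disjoint_union_left.mpr ⟨hu.disjoint, hv.disjoint⟩
  · rw [hblack x hx] at hb
    exact (mem_union.mp hy).elim (hu.black_of_black hb.1 y · z hz)
      (hv.black_of_black hb.2 y · z hz)
  · rw [hblack x hx, hred x hx]
    by_cases hb : (C.seq (i - 1)).black (C.cu i) x ∧ (C.seq (i - 1)).black (C.cv i) x
    · exact .inl hb
    · refine .inr ⟨hb, ?_⟩
      rcases mem_union.mp hy with hy | hy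
      · rcases hu.black_or_red y hy z hz hyz with h | h <;> simp [h]
      · rcases hv.black_or_red y hy z hz hyz with h | h <;> simp [h]

theorem HomogeneousBags.keep {i : ℕ} (h2 : 2 ≤ i) (hin : i ≤ n) {x y : α}
    (hx : x ∈ (C.seq (i - 1)).verts \ {C.cu i, C.cv i})
    (hy : y ∈ (C.seq (i - 1)).verts \ {C.cu i, C.cv i})
    (h : C.HomogeneousBags (i - 1) x y) : C.HomogeneousBags i x y := by
  obtain ⟨-, -, -, hcw, -, -, -, hsame⟩ := C.step i h2 hin
  obtain ⟨hblack, hred⟩ := hsame x hx y hy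
  have hbag {z : α} (hz : z ∈ (C.seq (i - 1)).verts \ {C.cu i, C.cv i}) :
      C.bag i z = C.bag (i - 1) z :=
    C.bag_of_ne h2 fun h => hcw (h ▸ (mem_sdiff.mp hz).1)
  refine ⟨?_, fun hb => ?_, ?_⟩ <;> rw [hbag hx, hbag hy]
  · exact h.disjoint
  · exact h.black_of_black (hblack.mp hb)
  · exact fun a ha b hb hab => (h.black_or_red a ha b hb hab).imp hblack.mpr hred.mpr

variable (C)

theorem homogeneousBags {j : ℕ} (hj : 1 ≤ j) (hjn : j ≤ n) {u w : α}
    (hu : u ∈ (C.seq j).verts) (hw : w ∈ (C.seq j).verts) (huw : u ≠ w) :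
    C.HomogeneousBags j u w :=
  C.induction_on_pairs (fun _ _ _ h => h.symm) (fun _ _ => homogeneousBags_one)
    (fun _ h2 hin _ hx => HomogeneousBags.contract h2 hin hx)
    (fun _ h2 hin _ hx _ hy _ => HomogeneousBags.keep h2 hin hx hy) hj hjn hu hw huw

end ContractionSeq

section Profiles

open Finset Function

variable {C : ContractionSeq α n}

namespace ContractionSeq

theorem bags_newT {i : ℕ} (h2 : 2 ≤ i) {T : Finset α} (hv : C.cw i ∈ T) :
    C.bags i T = C.bags (i - 1) (newT C i T) := by
  ext x
  simp only [bags, newT, mem_biUnion, mem_union, mem_erase, mem_insert, mem_singleton]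
  constructor
  · rintro ⟨u, hu, hx⟩
    by_cases hu' : u = C.cw i
    · rw [hu', C.bag_cw h2, mem_union] at hx
      exact hx.elim (⟨C.cu i, .inr (.inl rfl), ·⟩) (⟨C.cv i, .inr (.inr rfl), ·⟩)
    · exact ⟨u, .inl ⟨hu', hu⟩, C.bag_of_ne h2 hu' ▸ hx⟩
  · rintro ⟨u, ⟨hu', hu⟩ | rfl | rfl, hx⟩
    · exact ⟨u, hu, (C.bag_of_ne h2 hu').symm ▸ hx⟩
    · exact ⟨C.cw i, hv, C.bag_cw h2 ▸ mem_union_left _ hx⟩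
    · exact ⟨C.cw i, hv, C.bag_cw h2 ▸ mem_union_right _ hx⟩

theorem disjoint_bags {j : ℕ} (hj : 1 ≤ j) (hjn : j ≤ n) {A B : Finset α}
    (hA : A ⊆ (C.seq j).verts) (hB : B ⊆ (C.seq j).verts) (hAB : Disjoint A B) :
    Disjoint (C.bags j A) (C.bags j B) := by
  rw [bags, bags, disjoint_biUnion_left]
  refine fun u hu => (disjoint_biUnion_right _ _ _).mpr fun w hw => ?_
  exact
    (C.homogeneousBags hj hjn (hA hu) (hB hw) (disjoint_iff_ne.mp hAB u hu w hw)).disjoint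

variable {j : ℕ} {A B SA SB : Finset α}

theorem interedges_filter_eq_biUnion (hj : 1 ≤ j) (hjn : j ≤ n)
    (hA : A ⊆ (C.seq j).verts) (hB : B ⊆ (C.seq j).verts) (hAB : Disjoint A B)
    (hred : ∀ u ∈ A, ∀ w ∈ B, (C.seq j).red u w →
      Disjoint SA (C.bag j u) ∧ Disjoint SB (C.bag j w)) :
    ((C.seq 1).blackGraph.interedges (C.bags j A) (C.bags j B)).filter
        (fun p => p.1 ∈ SA ∨ p.2 ∈ SB) =
      ((A ×ˢ B).filter fun q => (C.seq j).black q.1 q.2).biUnion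
        fun q => (C.bag j q.1 ×ˢ C.bag j q.2).filter fun p => p.1 ∈ SA ∨ p.2 ∈ SB := by
  ext ⟨x, y⟩
  simp only [mem_filter, mem_biUnion, SimpleGraph.mem_interedges_iff, bags, mem_product,
    Prod.exists]
  constructor
  · rintro ⟨⟨⟨u, hu, hx⟩, ⟨w, hw, hy⟩, hxy⟩, hS⟩
    have H := C.homogeneousBags hj hjn (hA hu) (hB hw) (disjoint_iff_ne.mp hAB u hu w hw)
    refine ⟨u, w, ⟨⟨hu, hw⟩, (H.black_or_red x hx y hy hxy).resolve_right fun hr => ?_⟩,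
      ⟨hx, hy⟩, hS⟩
    obtain ⟨hSA, hSB⟩ := hred u hu w hw hr
    exact hS.elim (disjoint_left.mp hSA · hx) (disjoint_left.mp hSB · hy)
  · rintro ⟨u, w, ⟨⟨hu, hw⟩, huw⟩, ⟨hx, hy⟩, hS⟩
    have H := C.homogeneousBags hj hjn (hA hu) (hB hw) (disjoint_iff_ne.mp hAB u hu w hw)
    exact ⟨⟨⟨u, hu, hx⟩, ⟨w, hw, hy⟩, H.black_of_black huw x hx y hy⟩, hS⟩

theorem card_interedges_filter (hj : 1 ≤ j) (hjn : j ≤ n)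
    (hA : A ⊆ (C.seq j).verts) (hB : B ⊆ (C.seq j).verts) (hAB : Disjoint A B)
    (hred : ∀ u ∈ A, ∀ w ∈ B, (C.seq j).red u w →
      Disjoint SA (C.bag j u) ∧ Disjoint SB (C.bag j w)) :
    #(((C.seq 1).blackGraph.interedges (C.bags j A) (C.bags j B)).filter
        (fun p => p.1 ∈ SA ∨ p.2 ∈ SB)) =
      ∑ q ∈ (A ×ˢ B).filter (fun q => (C.seq j).black q.1 q.2),
        (#(SA ∩ C.bag j q.1) * #(C.bag j q.2) + #(SB ∩ C.bag j q.2) * #(C.bag j q.1) -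
          #(SA ∩ C.bag j q.1) * #(SB ∩ C.bag j q.2)) := by
  rw [interedges_filter_eq_biUnion hj hjn hA hB hAB hred, card_biUnion]
  · exact sum_congr rfl fun q _ => card_product_filter_mem_or _ _ _ _
  · intro q hq q' hq' hqq'
    rw [mem_coe, mem_filter, mem_product] at hq hq'
    refine disjoint_filter_filter (disjoint_product.mpr ?_)
    by_cases h1 : q.1 = q'.1
    · exact .inr (C.homogeneousBags hj hjn (hB hq.1.2) (hB hq'.1.2)
        fun h2 => hqq' (Prod.ext h1 h2)).disjoint
    · exact .inl (C.homogeneousBags hj hjn (hA hq.1.1) (hA hq'.1.1) h1).disjoint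

end ContractionSeq

theorem vcValue_eq_card_edgesFrom (i : ℕ) (T S : Finset α) :
    vcValue C i T S = #((C.seq 1).blackGraph.edgesFrom S (C.bags i T)) := by
  rw [vcValue, ← Set.ncard_coe_finset]
  congr 1
  ext e
  simp only [Set.mem_ofPred_eq, mem_coe, SimpleGraph.mem_edgesFrom]
  constructor
  · rintro ⟨x, y, rfl, hxy, hx, hy⟩
    exact ⟨x, hx, y, hy, hxy, rfl⟩
  · rintro ⟨x, hx, y, hy, hxy, rfl⟩
    exact ⟨x, y, rfl, hxy, hx, hy⟩

variable {i : ℕ} {T S : Finset α} {f : α → ℕ}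

theorem IsSolution.disjoint_bag_of_notMem {k d : ℕ} {D M : Finset α}
    (hS : IsSolution C i T f S) (hπ : IsExtProfile C k d i T D M f) {u : α} (hu : u ∈ T)
    (huD : u ∉ D) : Disjoint S (C.bag i u) := by
  obtain ⟨-, -, -, -, -, -, rfl⟩ := hπ
  have hfu : f u = 0 := by simpa [hu] using huD
  rwa [hS.2 u hu, card_eq_zero, ← disjoint_iff_inter_eq_empty] at hfu

variable {ι : Type*} [Fintype ι] {Tj Sj : ι → Finset α} {fj : ι → α → ℕ}

theorem card_biUnion_inter_bag
    (hdisj : Pairwise (Disjoint on fun j => C.bags i (Tj j)))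
    (hS : ∀ j, IsSolution C i (Tj j) (fj j) (Sj j)) {j : ι} {u : α} (hu : u ∈ Tj j) :
    #(univ.biUnion Sj ∩ C.bag i u) = fj j u := by
  rw [(hS j).2 u hu]
  congr 1
  ext x
  simp only [mem_inter, mem_biUnion, mem_univ, true_and]
  refine ⟨fun ⟨⟨ℓ, hxℓ⟩, hx⟩ => ⟨?_, hx⟩, fun ⟨hx, hxu⟩ => ⟨⟨j, hx⟩, hxu⟩⟩
  obtain rfl : ℓ = j := by_contra fun h =>
    disjoint_left.mp (hdisj h) ((hS ℓ).1 hxℓ) (mem_biUnion.mpr ⟨u, hu, hx⟩)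
  exact hxℓ

theorem isSolution_biUnion {k : ℕ} (h2 : 2 ≤ i) (hin : i ≤ n) (hv : C.cw i ∈ T) {f' : α → ℕ}
    (hf' : FCompat C k i T f f') (hT : newT C i T = univ.biUnion Tj)
    (hdisj : Pairwise (Disjoint on fun j => C.bags (i - 1) (Tj j)))
    (hfj : ∀ j, ∀ u ∈ Tj j, fj j u = f' u) (hS : ∀ j, IsSolution C (i - 1) (Tj j) (fj j) (Sj j)) :
    IsSolution C i T f (univ.biUnion Sj) := by
  have hcard {u : α} (hu : u ∈ newT C i T) : #(univ.biUnion Sj ∩ C.bag (i - 1) u) = f' u := by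
    obtain ⟨j, -, hj⟩ := mem_biUnion.mp (hT ▸ hu)
    rw [card_biUnion_inter_bag hdisj hS hj, hfj j u hj]
  refine ⟨?_, fun u hu => ?_⟩
  · rw [C.bags_newT h2 hv, hT, ContractionSeq.bags, biUnion_biUnion]
    exact biUnion_mono fun j _ => (hS j).1
  · obtain ⟨-, -, hf'cw, -, -, hf'old⟩ := hf'
    obtain ⟨hcu, hcv, hne, -⟩ := C.step i h2 hin
    by_cases hu' : u = C.cw i
    · subst hu'
      have huv := (C.homogeneousBags (by omega) (by omega) hcu hcv hne).disjoint
      rw [C.bag_cw h2, inter_union_distrib_left,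
        card_union_of_disjoint (huv.mono inter_subset_right inter_subset_right),
        hcard (by simp [newT]), hcard (by simp [newT]), hf'cw]
    · have hu'' : u ∈ T.erase (C.cw i) := mem_erase.mpr ⟨hu', hu⟩
      rw [C.bag_of_ne h2 hu', hcard (mem_union_left _ hu''), hf'old u hu'']

end Profiles

theorem cover_value_of_union_general {α : Type} [DecidableEq α] {n : ℕ}
    (C : ContractionSeq α n) (d k : ℕ)
    (i : ℕ) (h2 : 2 ≤ i) (hin : i ≤ n)
    (T D : Finset α) (f : α → ℕ)
    (hv : C.cw i ∈ T)
    (f' : α → ℕ) (hf' : FCompat C k i T f f')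
    (m : ℕ) (Tj Dj : Fin m → Finset α) (fj : Fin m → α → ℕ)
    (hdec : IsFDecomp C k d i T D ∅ f' m Tj Dj (fun _ => ∅) fj)
    (Sj : Fin m → Finset α) (νj : Fin m → ℕ)
    (hSj : ∀ j, IsSolution C (i - 1) (Tj j) (fj j) (Sj j))
    (hν : ∀ j, νj j = vcValue C (i - 1) (Tj j) (Sj j)) :
    IsSolution C i T f (Finset.univ.biUnion Sj) ∧
    vcValue C i T (Finset.univ.biUnion Sj) =
      (∑ j, νj j) +
      ∑ p ∈ Finset.univ.filter (fun p : Fin m × Fin m => p.1 < p.2),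
        ∑ q ∈ (Tj p.1 ×ˢ Tj p.2).filter (fun q => (C.seq (i - 1)).black q.1 q.2),
          (fj p.1 q.1 * (C.bag (i - 1) q.2).card +
            fj p.2 q.2 * (C.bag (i - 1) q.1).card -
            fj p.1 q.1 * fj p.2 q.2) := by
  obtain ⟨hext, hfj, -, -, hbasic, hTdisj, hT, -, -, hnored⟩ := hdec
  have hsub (j : Fin m) : Tj j ⊆ (C.seq (i - 1)).verts := (hbasic j).1
  have hbagsdisj : Pairwise (Function.onFun Disjoint fun j => C.bags (i - 1) (Tj j)) := fun j ℓ h =>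
    C.disjoint_bags (by omega) (by omega) (hsub j) (hsub ℓ) (hTdisj j ℓ h)
  have hbags : C.bags i T = Finset.univ.biUnion fun j => C.bags (i - 1) (Tj j) := by
    rw [C.bags_newT h2 hv, hT, ContractionSeq.bags, Finset.biUnion_biUnion]
    rfl
  -- a red edge between `Tj j` and `Tj ℓ` meets neither `Dj j` nor `Dj ℓ`
  have hred {j ℓ : Fin m} (hjℓ : j ≠ ℓ) : ∀ u ∈ Tj j, ∀ w ∈ Tj ℓ, (C.seq (i - 1)).red u w →
      Disjoint (Sj j) (C.bag (i - 1) u) ∧ Disjoint (Sj ℓ) (C.bag (i - 1) w) :=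
    fun u hu w hw hr =>
      ⟨(hSj j).disjoint_bag_of_notMem (hext j) hu fun huD =>
          hnored ℓ j hjℓ.symm w hw u huD ((C.seq (i - 1)).red_symm _ _ hr),
        (hSj ℓ).disjoint_bag_of_notMem (hext ℓ) hw fun hwD => hnored j ℓ hjℓ u hu w hwD hr⟩
  refine ⟨isSolution_biUnion h2 hin hv hf' hT hbagsdisj hfj hSj, ?_⟩
  rw [vcValue_eq_card_edgesFrom, hbags,
    SimpleGraph.card_edgesFrom_biUnion hbagsdisj fun j => (hSj j).1]
  congr 1
  · exact Finset.sum_congr rfl fun j _ => ((hν j).trans (vcValue_eq_card_edgesFrom _ _ _)).symm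
  · refine Finset.sum_congr rfl fun p hp => ?_
    have hne := (Finset.mem_filter.mp hp).2.ne
    rw [SimpleGraph.crossEdges, C.card_interedges_filter (by omega) (by omega) (hsub _)
      (hsub _) (hTdisj _ _ hne) (hred hne)]
    refine Finset.sum_congr rfl fun q hq => ?_
    obtain ⟨hq1, hq2⟩ := Finset.mem_product.mp (Finset.mem_filter.mp hq).1
    rw [(hSj p.1).2 q.1 hq1, (hSj p.2).2 q.2 hq2]

/-- (Lemma 10.) The union of solutions of the profiles of an
`f'`-decomposition of `π = (T, D, ∅, f)` is a solution of `π` whose vertex-cover-value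
equals `Σⱼ νⱼ` plus the stated sum over pairs `j < ℓ` and black edges of `G_{i-1}`. -/
theorem cover_value_of_union {α : Type} [DecidableEq α] {n : ℕ}
    (C : ContractionSeq α n) (d k : ℕ) (hW : C.HasWidth d)
    (i : ℕ) (h2 : 2 ≤ i) (hin : i ≤ n)
    (T D : Finset α) (f : α → ℕ) (hπ : IsExtProfile C k d i T D ∅ f)
    (hv : C.cw i ∈ T)
    (f' : α → ℕ) (hf' : FCompat C k i T f f')
    (m : ℕ) (Tj Dj : Fin m → Finset α) (fj : Fin m → α → ℕ)
    (hdec : IsFDecomp C k d i T D ∅ f' m Tj Dj (fun _ => ∅) fj)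
    (Sj : Fin m → Finset α) (νj : Fin m → ℕ)
    (hSj : ∀ j, IsSolution C (i - 1) (Tj j) (fj j) (Sj j))
    (hν : ∀ j, νj j = vcValue C (i - 1) (Tj j) (Sj j)) :
    IsSolution C i T f (Finset.univ.biUnion Sj) ∧
    vcValue C i T (Finset.univ.biUnion Sj) =
      (∑ j, νj j) +
      ∑ p ∈ Finset.univ.filter (fun p : Fin m × Fin m => p.1 < p.2),
        ∑ q ∈ (Tj p.1 ×ˢ Tj p.2).filter (fun q => (C.seq (i - 1)).black q.1 q.2),
          (fj p.1 q.1 * (C.bag (i - 1) q.2).card +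
            fj p.2 q.2 * (C.bag (i - 1) q.1).card -
            fj p.1 q.1 * fj p.2 q.2) :=
  cover_value_of_union_general C d k i h2 hin T D f hv f' hf' m Tj Dj fj hdec Sj νj hSj hν
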